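/- arXiv:1107.4392 — 2 statements merged into one kernel-verified Lean document; each statement's English description precedes it below -/
import Mathlib

section
/- Let H and K be subgroups of a finite abelian group G with H ∩ K = {0}, and let D ⊆ H and E ⊆ K be multisets. For y ∈ K: (a) if y ∈ ΣE, then (H + {y}) ∩ Σ(D ∪ E) = ΣD + {y}; (b) if y ∉ ΣE, then (H + {y}) ∩ Σ(D ∪ E) is empty. -/
open scoped Pointwise

/-- The sumset ΣA of a multiset A: all sums of submultisets of A (including the empty sum 0). -/
def sumset {G : Type*} [AddCommMonoid G] (A : Multiset G) : Set G :=
  {x | ∃ B ≤ A, B.sum = x}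

theorem Multiset.exists_le_le_of_le_add {α : Type*} {B D E : Multiset α} (h : B ≤ D + E) :
    ∃ B₁ ≤ D, ∃ B₂ ≤ E, B = B₁ + B₂ := by
  classical
  refine ⟨B ∩ D, Multiset.inter_le_right, B - D, ?_, ?_⟩
  · rwa [Multiset.sub_le_iff_le_add, add_comm]
  · ext a
    simp only [Multiset.count_add, Multiset.count_inter, Multiset.count_sub]
    omega

theorem sumset_add {G : Type*} [AddCommMonoid G] (D E : Multiset G) :
    sumset (D + E) = sumset D + sumset E := by
  ext x
  constructor
  · rintro ⟨B, hB, rfl⟩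
    obtain ⟨B₁, hB₁, B₂, hB₂, rfl⟩ := Multiset.exists_le_le_of_le_add hB
    exact ⟨_, ⟨B₁, hB₁, rfl⟩, _, ⟨B₂, hB₂, rfl⟩, (Multiset.sum_add _ _).symm⟩
  · rintro ⟨_, ⟨B₁, hB₁, rfl⟩, _, ⟨B₂, hB₂, rfl⟩, rfl⟩
    exact ⟨B₁ + B₂, add_le_add hB₁ hB₂, Multiset.sum_add _ _⟩

theorem sumset_subset {G S : Type*} [AddCommMonoid G] [SetLike S G] [AddSubmonoidClass S G]
    {H : S} {D : Multiset G} (hD : ∀ x ∈ D, x ∈ H) : sumset D ⊆ H := by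
  rintro _ ⟨B, hB, rfl⟩
  exact multiset_sum_mem B fun x hx => hD x (Multiset.mem_of_le hB hx)

/-- Since `H + K` is a direct sum, a point of `S + T` lies in the coset `H + y` exactly when
its `K`-component is `y`. -/
theorem mem_coset_inter_add_iff {G : Type*} [AddCommGroup G] {H K : AddSubgroup G}
    (hHK : Disjoint H K) {S T : Set G} (hS : S ⊆ H) (hT : T ⊆ K) {y : G} (hy : y ∈ K) {x : G} :
    x ∈ ((H : Set G) + {y}) ∩ (S + T) ↔ y ∈ T ∧ x ∈ S + {y} := by
  rw [Set.add_singleton, Set.add_singleton]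
  constructor
  · rintro ⟨⟨h, hh, rfl⟩, s, hs, t, ht, hst⟩
    have hsh : ((⟨s, hS hs⟩, ⟨t, hT ht⟩) : H × K) = (⟨h, hh⟩, ⟨y, hy⟩) :=
      AddSubgroup.add_injective_of_disjoint hHK hst
    simp only [Prod.mk.injEq, Subtype.mk.injEq] at hsh
    obtain ⟨rfl, rfl⟩ := hsh
    exact ⟨ht, s, hs, rfl⟩
  · rintro ⟨hyT, s, hs, rfl⟩
    exact ⟨⟨s, hS hs, rfl⟩, s, hs, y, hyT, rfl⟩

theorem stmt_6_general {G : Type*} [AddCommGroup G]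
    (H K : AddSubgroup G) (hinf : H ⊓ K = ⊥)
    (D E : Multiset G) (hD : ∀ x ∈ D, x ∈ H) (hE : ∀ x ∈ E, x ∈ K)
    (y : G) (hy : y ∈ K) :
    (y ∈ sumset E → ((H : Set G) + {y}) ∩ sumset (D + E) = sumset D + {y}) ∧
    (y ∉ sumset E → ((H : Set G) + {y}) ∩ sumset (D + E) = ∅) := by
  have hmem (x : G) :
      x ∈ ((H : Set G) + {y}) ∩ sumset (D + E) ↔ y ∈ sumset E ∧ x ∈ sumset D + {y} := by
    rw [sumset_add]
    exact mem_coset_inter_add_iff (disjoint_iff.mpr hinf) (sumset_subset hD) (sumset_subset hE) hy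
  exact ⟨fun hyE => Set.ext fun x => (hmem x).trans (and_iff_right hyE),
    fun hyE => Set.eq_empty_of_forall_notMem fun x hx => hyE ((hmem x).mp hx).1⟩

theorem stmt_6 {G : Type*} [AddCommGroup G] [Fintype G]
    (H K : AddSubgroup G) (hinf : H ⊓ K = ⊥)
    (D E : Multiset G) (hD : ∀ x ∈ D, x ∈ H) (hE : ∀ x ∈ E, x ∈ K)
    (y : G) (hy : y ∈ K) :
    (y ∈ sumset E → ((H : Set G) + {y}) ∩ sumset (D + E) = sumset D + {y}) ∧
    (y ∉ sumset E → ((H : Set G) + {y}) ∩ sumset (D + E) = ∅) :=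
  stmt_6_general H K hinf D E hD hE y hy
end

section
/- Let p be a prime and let A be a valid multiset in Z_p × Z_p (i.e., 0 ∉ A and every nontrivial proper subgroup contains fewer than p elements of A with multiplicity). Suppose there exists a nonzero x ∈ Z_p × Z_p such that the number of elements of A (with multiplicity) lying in the cyclic subgroup generated by x is at least |A| − (p−1). Then #ΣA ≥ (|A| + 2 − p)·p. -/
open scoped Classical in
/-- The number of elements of the multiset A (with multiplicity) lying in the subgroup H. -/
noncomputable def inCount {G : Type*} [AddCommGroup G] (A : Multiset G) (H : AddSubgroup G) : ℕ :=
  Multiset.card (A.filter (fun x => x ∈ H))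

/-- A multiset in (Z/pZ)² is valid if 0 ∉ A and every nontrivial (cyclic) subgroup contains
fewer than p elements of A, counted with multiplicity. -/
def ValidMS (p : ℕ) (A : Multiset (ZMod p × ZMod p)) : Prop :=
  (0 : ZMod p × ZMod p) ∉ A ∧
    ∀ x : ZMod p × ZMod p, x ≠ 0 → inCount A (AddSubgroup.zmultiples x) < p

open Multiset Set Pointwise

lemma zero_mem_sumset {G : Type*} [AddCommMonoid G] (A : Multiset G) : 0 ∈ sumset A :=
  ⟨0, Multiset.zero_le _, rfl⟩

lemma sumset_zero {G : Type*} [AddCommMonoid G] : sumset (0 : Multiset G) = {0} := by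
  ext y
  constructor
  · rintro ⟨B, hB, rfl⟩
    simp [Multiset.le_zero.mp hB]
  · rintro rfl
    exact zero_mem_sumset 0

lemma sumset_cons {G : Type*} [AddCommMonoid G] (a : G) (T : Multiset G) :
    sumset (a ::ₘ T) = sumset T ∪ (a + ·) '' sumset T := by
  classical
  ext y
  constructor
  · rintro ⟨B, hB, rfl⟩
    by_cases h : a ∈ B
    · right
      refine ⟨(B.erase a).sum, ⟨B.erase a, ?_, rfl⟩, ?_⟩
      · exact (Multiset.cons_le_cons_iff a).mp (by rwa [Multiset.cons_erase h])
      · dsimp only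
        rw [← Multiset.sum_cons, Multiset.cons_erase h]
    · left
      exact ⟨B, (Multiset.le_cons_of_notMem h).mp hB, rfl⟩
  · rintro (⟨B, hB, rfl⟩ | ⟨z, ⟨B, hB, rfl⟩, rfl⟩)
    · exact ⟨B, hB.trans (Multiset.le_cons_self _ _), rfl⟩
    · exact ⟨a ::ₘ B, Multiset.cons_le_cons a hB, by simp⟩

lemma sumset_map {G H : Type*} [AddCommMonoid G] [AddCommMonoid H] (f : G →+ H)
    (T : Multiset G) : sumset (T.map f) = f '' sumset T := by
  induction T using Multiset.induction with
  | empty => simp [sumset_zero]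
  | cons a T ih =>
    rw [Multiset.map_cons, sumset_cons, sumset_cons, ih, Set.image_union,
      Set.image_image, Set.image_image]
    congr 1
    ext z
    simp [map_add]

lemma sumset_zmod_card {p : ℕ} (hp : p.Prime) (S : Multiset (ZMod p))
    (hS : ∀ a ∈ S, a ≠ 0) : min p (Multiset.card S + 1) ≤ (sumset S).ncard := by
  classical
  haveI : Fact p.Prime := ⟨hp⟩
  induction S using Multiset.induction with
  | empty =>
    rw [sumset_zero, Set.ncard_singleton, Multiset.card_zero]
    exact min_le_right _ _
  | cons a T ih =>
    have ha : a ≠ 0 := hS a (Multiset.mem_cons_self a T)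
    have hT := ih (fun b hb => hS b (Multiset.mem_cons_of_mem hb))
    have hfin : (sumset T).Finite := Set.toFinite _
    set t : Finset (ZMod p) := hfin.toFinset with ht
    have hset : sumset (a ::ₘ T) = ↑(({0, a} : Finset (ZMod p)) + t) := by
      rw [sumset_cons]
      ext z
      simp only [Finset.coe_add, Set.mem_add, Finset.coe_insert, Finset.coe_singleton,
        Set.mem_insert_iff, Set.mem_singleton_iff, Set.mem_union, Set.mem_image,
        Set.Finite.mem_toFinset, Set.Finite.coe_toFinset, ht]
      constructor
      · rintro (h | ⟨w, hw, rfl⟩)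
        · exact ⟨0, Or.inl rfl, z, h, by simp⟩
        · exact ⟨a, Or.inr rfl, w, hw, rfl⟩
      · rintro ⟨u, (rfl | rfl), w, hw, rfl⟩
        · simpa using Or.inl hw
        · exact Or.inr ⟨w, hw, rfl⟩
    have hcard2 : ({0, a} : Finset (ZMod p)).card = 2 := by
      rw [Finset.card_insert_of_notMem (by simpa using ha.symm), Finset.card_singleton]
    have htne : t.Nonempty := ⟨0, by simp [ht]; exact zero_mem_sumset T⟩
    have hcd := ZMod.cauchy_davenport hp (s := {0, a}) (t := t)
      ⟨0, by simp⟩ htne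
    rw [hcard2] at hcd
    have htcard : t.card = (sumset T).ncard := by
      rw [Set.ncard_eq_toFinset_card _ hfin]
    rw [hset, Set.ncard_coe_finset]
    simp only [Multiset.card_cons]
    omega

lemma mem_zmultiples_iff_smul {p : ℕ} [NeZero p] (x u : ZMod p × ZMod p) :
    u ∈ AddSubgroup.zmultiples x ↔ ∃ c : ZMod p, c • x = u := by
  constructor
  · rintro h
    obtain ⟨k, hk⟩ := AddSubgroup.mem_zmultiples_iff.mp h
    exact ⟨(k : ZMod p), by rw [Int.cast_smul_eq_zsmul]; exact hk⟩
  · rintro ⟨c, rfl⟩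
    have hc : c • x = (c.val : ℤ) • x := by
      rw [← Int.cast_smul_eq_zsmul (ZMod p), Int.cast_natCast, ZMod.natCast_val, ZMod.cast_id]
    rw [hc]
    exact AddSubgroup.mem_zmultiples_iff.mpr ⟨(c.val : ℤ), rfl⟩


lemma ncard_set_prod {α β : Type*} (s : Set α) (t : Set β) :
    (s ×ˢ t).ncard = s.ncard * t.ncard := by
  rw [← Nat.card_coe_set_eq, ← Nat.card_coe_set_eq, ← Nat.card_coe_set_eq,
    ← Nat.card_prod]
  exact Nat.card_congr (Equiv.Set.prod s t)

lemma exists_fg {p : ℕ} (hp : p.Prime) (x : ZMod p × ZMod p) (hx : x ≠ 0) :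
    ∃ f g : (ZMod p × ZMod p) →+ ZMod p,
      (∀ u, f u = 0 ↔ u ∈ AddSubgroup.zmultiples x) ∧
      Set.InjOn g (AddSubgroup.zmultiples x) := by
  haveI : Fact p.Prime := ⟨hp⟩
  have key : ∀ u : ZMod p × ZMod p, x.2 * u.1 = x.1 * u.2 →
      u ∈ AddSubgroup.zmultiples x := by
    intro u h
    rcases eq_or_ne x.1 0 with h1 | h1
    · have h2 : x.2 ≠ 0 := by
        intro h2; exact hx (Prod.ext h1 h2)
      refine (mem_zmultiples_iff_smul x u).mpr ⟨u.2 * x.2⁻¹, Prod.ext ?_ ?_⟩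
      · show u.2 * x.2⁻¹ * x.1 = u.1
        rw [h1] at h ⊢
        rw [zero_mul] at h
        have hu1 : u.1 = 0 := (mul_eq_zero.mp h).resolve_left h2
        simp [hu1]
      · show u.2 * x.2⁻¹ * x.2 = u.2
        field_simp
    · refine (mem_zmultiples_iff_smul x u).mpr ⟨u.1 * x.1⁻¹, Prod.ext ?_ ?_⟩
      · show u.1 * x.1⁻¹ * x.1 = u.1
        field_simp
      · show u.1 * x.1⁻¹ * x.2 = u.2
        field_simp
        linear_combination h
  have keyr : ∀ u ∈ AddSubgroup.zmultiples x, x.2 * u.1 = x.1 * u.2 := by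
    intro u hu
    obtain ⟨c, rfl⟩ := (mem_zmultiples_iff_smul x u).mp hu
    show x.2 * (c • x).1 = x.1 * (c • x).2
    simp only [Prod.smul_fst, Prod.smul_snd, smul_eq_mul]
    ring
  set f : (ZMod p × ZMod p) →+ ZMod p :=
    AddMonoidHom.mk' (fun u => x.2 * u.1 - x.1 * u.2)
      (by intro a b; simp only [Prod.fst_add, Prod.snd_add]; ring) with hf
  have hker : ∀ u, f u = 0 ↔ u ∈ AddSubgroup.zmultiples x := by
    intro u
    constructor
    · intro h
      have h' : x.2 * u.1 - x.1 * u.2 = 0 := h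
      exact key u (sub_eq_zero.mp h')
    · intro h
      show x.2 * u.1 - x.1 * u.2 = 0
      rw [keyr u h, sub_self]
  rcases eq_or_ne x.1 0 with h1 | h1
  · have h2 : x.2 ≠ 0 := fun h2 => hx (Prod.ext h1 h2)
    refine ⟨f, AddMonoidHom.snd _ _, hker, ?_⟩
    intro u hu v hv huv
    obtain ⟨a, rfl⟩ := (mem_zmultiples_iff_smul x u).mp hu
    obtain ⟨b, rfl⟩ := (mem_zmultiples_iff_smul x v).mp hv
    have : a * x.2 = b * x.2 := by simpa using huv
    rw [mul_left_injective₀ h2 this]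
  · refine ⟨f, AddMonoidHom.fst _ _, hker, ?_⟩
    intro u hu v hv huv
    obtain ⟨a, rfl⟩ := (mem_zmultiples_iff_smul x u).mp hu
    obtain ⟨b, rfl⟩ := (mem_zmultiples_iff_smul x v).mp hv
    have : a * x.1 = b * x.1 := by simpa using huv
    rw [mul_left_injective₀ h1 this]

lemma arith_bound (p a b n : ℕ) (hpa : a + 1 ≤ p) (hpb : b + 1 ≤ p) (hn : n = a + b) :
    (n + 2 - p) * p ≤ (a + 1) * (b + 1) := by
  rcases le_or_gt (n + 2) p with h | h
  · simp [Nat.sub_eq_zero_of_le h]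
  · have hP : p ≤ n + 2 := h.le
    zify [hP]
    have hA : (0 : ℤ) ≤ (p : ℤ) - ((a : ℤ) + 1) := by
      have : (a : ℤ) + 1 ≤ (p : ℤ) := by exact_mod_cast hpa
      linarith
    have hB : (0 : ℤ) ≤ (p : ℤ) - ((b : ℤ) + 1) := by
      have : (b : ℤ) + 1 ≤ (p : ℤ) := by exact_mod_cast hpb
      linarith
    have hN : (n : ℤ) = a + b := by exact_mod_cast hn
    nlinarith [mul_nonneg hA hB]


theorem stmt_8 (p : ℕ) (hp : p.Prime) (A : Multiset (ZMod p × ZMod p)) (hA : ValidMS p A)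
    (x : ZMod p × ZMod p) (hx : x ≠ 0)
    (hline : inCount A (AddSubgroup.zmultiples x) + (p - 1) ≥ Multiset.card A) :
    (sumset A).ncard ≥ (Multiset.card A + 2 - p) * p := by
  classical
  haveI : Fact p.Prime := ⟨hp⟩
  obtain ⟨hA0, hAsub⟩ := hA
  set H := AddSubgroup.zmultiples x with hH
  obtain ⟨f, g, hker, ginj⟩ := exists_fg hp x hx
  set B := A.filter (fun y => y ∈ H) with hBdef
  set C := A.filter (fun y => ¬ y ∈ H) with hCdef
  have hBC : B + C = A := Multiset.filter_add_not _ _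
  have hkB : Multiset.card B = inCount A H := by
    unfold inCount
    congr 1
  have hBm : ∀ b ∈ B, b ∈ H := fun b hb => (Multiset.mem_filter.mp hb).2
  have hCm : ∀ c ∈ C, c ∉ H := fun c hc => (Multiset.mem_filter.mp hc).2
  have hBsub : B ≤ A := Multiset.filter_le _ _
  have hSBH : sumset B ⊆ (H : Set _) := by
    rintro _ ⟨B', hB', rfl⟩
    exact multiset_sum_mem _ (fun b hb => hBm b (Multiset.mem_of_le hB' hb))
  -- bound on sumset B
  have hgB : ∀ a ∈ B.map g, a ≠ 0 := by
    intro a ha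
    obtain ⟨b, hb, rfl⟩ := Multiset.mem_map.mp ha
    intro h0
    have hb0 : b ≠ 0 := fun e => hA0 (e ▸ Multiset.mem_of_le hBsub hb)
    exact hb0 (ginj (hBm b hb) (AddSubgroup.zero_mem H) (by simpa using h0))
  have h1 : min p (Multiset.card B + 1) ≤ (sumset (B.map g)).ncard := by
    simpa using sumset_zmod_card hp _ hgB
  have h2 : (sumset (B.map g)).ncard = (sumset B).ncard := by
    rw [sumset_map]
    exact Set.ncard_image_of_injOn (ginj.mono hSBH)
  -- bound on f '' sumset C
  have hfC : ∀ a ∈ C.map f, a ≠ 0 := by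
    intro a ha
    obtain ⟨c, hc, rfl⟩ := Multiset.mem_map.mp ha
    exact fun h0 => hCm c hc ((hker c).mp h0)
  set T := f '' sumset C with hT
  have h3 : min p (Multiset.card C + 1) ≤ T.ncard := by
    rw [hT, ← sumset_map]
    simpa using sumset_zmod_card hp _ hfC
  -- injection into sumset A
  have hcc : ∀ t, ∃ w, t ∈ T → w ∈ sumset C ∧ f w = t := by
    intro t
    rcases em (t ∈ T) with ht | ht
    · obtain ⟨w, hw, rfl⟩ := ht
      exact ⟨w, fun _ => ⟨hw, rfl⟩⟩
    · exact ⟨0, fun h => absurd h ht⟩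
  choose cc hcc using hcc
  have himg : ∀ q ∈ (sumset B) ×ˢ T, q.1 + cc q.2 ∈ sumset A := by
    rintro ⟨b, t⟩ ⟨hb, ht⟩
    obtain ⟨B', hB', rfl⟩ := hb
    obtain ⟨⟨C', hC', hCs⟩, -⟩ := hcc t ht
    refine ⟨B' + C', ?_, by rw [Multiset.sum_add, hCs]⟩
    rw [← hBC]
    exact _root_.add_le_add hB' hC'
  have hinjφ : Set.InjOn (fun q : (ZMod p × ZMod p) × ZMod p => q.1 + cc q.2)
      ((sumset B) ×ˢ T) := by
    rintro ⟨b, t⟩ ⟨hb, ht⟩ ⟨b', t'⟩ ⟨hb', ht'⟩ he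
    simp only at he
    have hfb : f b = 0 := (hker b).mpr (hSBH hb)
    have hfb' : f b' = 0 := (hker b').mpr (hSBH hb')
    have htt : t = t' := by
      have h := congrArg f he
      rw [_root_.map_add, _root_.map_add, hfb, hfb', (hcc t ht).2, (hcc t' ht').2] at h
      simpa using h
    subst htt
    have hbb : b = b' := by
      exact add_right_cancel he
    rw [hbb]
  have hfinA : (sumset A).Finite := Set.toFinite _
  have hmain : (sumset B).ncard * T.ncard ≤ (sumset A).ncard := by
    calc (sumset B).ncard * T.ncard = ((sumset B) ×ˢ T).ncard := (ncard_set_prod _ _).symm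
      _ = ((fun q : (ZMod p × ZMod p) × ZMod p => q.1 + cc q.2) '' ((sumset B) ×ˢ T)).ncard :=
          (Set.ncard_image_of_injOn hinjφ).symm
      _ ≤ (sumset A).ncard := Set.ncard_le_ncard (by
            rintro _ ⟨q, hq, rfl⟩
            exact himg q hq) hfinA
  -- arithmetic
  have hcB : Multiset.card B < p := by rw [hkB]; exact hAsub x hx
  have hcards : Multiset.card B + Multiset.card C = Multiset.card A := by
    rw [← hBC, Multiset.card_add]
  have hp1 : 1 ≤ p := hp.pos
  have hcC : Multiset.card C + 1 ≤ p := by omega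
  have hminB : min p (Multiset.card B + 1) = Multiset.card B + 1 := min_eq_right (by omega)
  have hminC : min p (Multiset.card C + 1) = Multiset.card C + 1 := min_eq_right hcC
  rw [hminB] at h1
  rw [hminC] at h3
  have harith := arith_bound p (Multiset.card B) (Multiset.card C) (Multiset.card A)
    (by omega) hcC hcards.symm
  calc (Multiset.card A + 2 - p) * p
      ≤ (Multiset.card B + 1) * (Multiset.card C + 1) := harith
    _ ≤ (sumset B).ncard * T.ncard := Nat.mul_le_mul (h2 ▸ h1) h3
    _ ≤ (sumset A).ncard := hmain
end
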